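/- arXiv:2309.14802 — 6 statements merged into one kernel-verified Lean document; each statement's English description precedes it below -/
import Mathlib

section
/- Let E be a real inner product space, let α > 0 and τ ≥ 0, and let S, D ∈ E. Then S = α·max(‖D‖ − τ, 0)·‖D‖⁻¹·D (with the convention that the right-hand side is 0 when D = 0) holds if and only if either (‖D‖ ≤ τ and S = 0) or (‖D‖ > τ, S ≠ 0, and D = (1/α)·S + (τ/‖S‖)·S). That is, the activated Euler constitutive relation is equivalent to the dichotomy: below the activation threshold the stress vanishes, and above it the fluid responds as a Navier–Stokes fluid with an activation offset. -/
/-!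
Above the threshold both sides of the equivalence say that `S` is a positive multiple of `D`
with `‖S‖ = α (‖D‖ - τ)`; given that norm relation the two scalar coefficients
`α (‖D‖ - τ) / ‖D‖` and `1 / α + τ / ‖S‖` are reciprocal, so each equation is the other one
solved for the other vector.
-/

open RealInnerProductSpace

namespace ActivatedEuler

variable {E : Type*} [NormedAddCommGroup E] [NormedSpace ℝ E] {α τ : ℝ} {S D : E}

theorem coeff_inv {s d : ℝ} (hα : α ≠ 0) (hs : s ≠ 0) (hsd : s = α * (d - τ)) :
    (α * (d - τ) * d⁻¹)⁻¹ = 1 / α + τ / s := by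
  subst hsd
  have hdτ : d - τ ≠ 0 := right_ne_zero_of_mul hs
  field_simp
  ring

theorem norm_eq_of_eq_smul (hα : 0 ≤ α) (hτD : τ ≤ ‖D‖) (hD : D ≠ 0)
    (h : S = (α * (‖D‖ - τ) * ‖D‖⁻¹) • D) : ‖S‖ = α * (‖D‖ - τ) := by
  have hcoeff : 0 ≤ α * (‖D‖ - τ) * ‖D‖⁻¹ := by
    have := sub_nonneg.2 hτD
    positivity
  rw [h, norm_smul, Real.norm_of_nonneg hcoeff, inv_mul_cancel_right₀ (norm_ne_zero_iff.2 hD)]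

theorem norm_eq_of_eq_add_smul (hα : 0 < α) (hτ : 0 ≤ τ) (hS : S ≠ 0)
    (h : D = (1 / α + τ / ‖S‖) • S) : ‖S‖ = α * (‖D‖ - τ) := by
  have hSpos : 0 < ‖S‖ := norm_pos_iff.2 hS
  rw [h, norm_smul, Real.norm_of_nonneg (by positivity)]
  field_simp
  ring

theorem eq_smul_iff_eq_add_smul (hα : α ≠ 0) (hD : D ≠ 0) (hS : S ≠ 0)
    (hnorm : ‖S‖ = α * (‖D‖ - τ)) :
    S = (α * (‖D‖ - τ) * ‖D‖⁻¹) • D ↔ D = (1 / α + τ / ‖S‖) • S := by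
  have hcoeff : α * (‖D‖ - τ) * ‖D‖⁻¹ ≠ 0 :=
    hnorm ▸ mul_ne_zero (norm_ne_zero_iff.2 hS) (inv_ne_zero (norm_ne_zero_iff.2 hD))
  rw [← coeff_inv hα (norm_ne_zero_iff.2 hS) hnorm,
    eq_inv_smul_iff₀ hcoeff, eq_comm]

end ActivatedEuler

open ActivatedEuler in
theorem activated_euler_formula_iff_dichotomy
    {E : Type*} [NormedAddCommGroup E] [InnerProductSpace ℝ E]
    (α τ : ℝ) (hα : 0 < α) (hτ : 0 ≤ τ) (S D : E) :
    S = (α * max (‖D‖ - τ) 0 * ‖D‖⁻¹) • D ↔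
      (‖D‖ ≤ τ ∧ S = 0) ∨
        (τ < ‖D‖ ∧ S ≠ 0 ∧ D = (1 / α) • S + (τ / ‖S‖) • S) := by
  rw [← add_smul]
  rcases le_or_gt ‖D‖ τ with hle | hlt
  · simp [hle, hle.not_gt]
  · have hD : D ≠ 0 := norm_pos_iff.1 (hτ.trans_lt hlt)
    rw [max_eq_left (sub_nonneg.2 hlt.le)]
    simp only [hlt, hlt.not_ge, false_and, true_and, false_or]
    constructor
    · intro h
      have hnorm := norm_eq_of_eq_smul hα.le hlt.le hD h
      have hS : S ≠ 0 := norm_pos_iff.1 (hnorm ▸ mul_pos hα (sub_pos.2 hlt))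
      exact ⟨hS, (eq_smul_iff_eq_add_smul hα.ne' hD hS hnorm).1 h⟩
    · rintro ⟨hS, h⟩
      exact (eq_smul_iff_eq_add_smul hα.ne' hD hS (norm_eq_of_eq_add_smul hα hτ hS h)).2 h
end

section
/- Let E be a real inner product space, α > 0, τ ≥ 0, and define G : E → E by G(D) = α·max(‖D‖ − τ, 0)·‖D‖⁻¹·D for D ≠ 0 and G(0) = 0. Then G is a monotone operator: for all x, y ∈ E, ⟨G(x) − G(y), x − y⟩ ≥ 0. -/
open RealInnerProductSpace

theorem activated_euler_monotone
    {E : Type*} [NormedAddCommGroup E] [InnerProductSpace ℝ E]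
    (α τ : ℝ) (hα : 0 < α) (hτ : 0 ≤ τ)
    (G : E → E) (hG0 : G 0 = 0)
    (hG : ∀ D : E, D ≠ 0 → G D = (α * max (‖D‖ - τ) 0 * ‖D‖⁻¹) • D) :
    ∀ x y : E, 0 ≤ ⟪G x - G y, x - y⟫ := by
  have hall : ∀ D : E, G D = (α * max (‖D‖ - τ) 0 * ‖D‖⁻¹) • D := by
    intro D
    by_cases h : D = 0
    · subst h; simp [hG0]
    · exact hG D h
  intro x y
  set s := ‖x‖ with hsdef
  set t := ‖y‖ with htdef
  set a := α * max (s - τ) 0 * s⁻¹ with ha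
  set b := α * max (t - τ) 0 * t⁻¹ with hb
  have hs : 0 ≤ s := norm_nonneg x
  have ht : 0 ≤ t := norm_nonneg y
  have ha0 : 0 ≤ a := by
    apply mul_nonneg (mul_nonneg hα.le (le_max_right _ _)) (inv_nonneg.2 hs)
  have hb0 : 0 ≤ b := by
    apply mul_nonneg (mul_nonneg hα.le (le_max_right _ _)) (inv_nonneg.2 ht)
  have hxy : ⟪x, y⟫ ≤ s * t := real_inner_le_norm x y
  have key : ⟪G x - G y, x - y⟫ = a * s ^ 2 + b * t ^ 2 - (a + b) * ⟪x, y⟫ := by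
    rw [hall x, hall y]
    rw [inner_sub_left, inner_sub_right, inner_sub_right,
      real_inner_smul_left, real_inner_smul_left, real_inner_smul_left,
      real_inner_smul_left, real_inner_self_eq_norm_sq,
      real_inner_self_eq_norm_sq, real_inner_comm y x]
    ring
  have has2 : a * s ^ 2 = α * max (s - τ) 0 * s := by
    rcases eq_or_lt_of_le hs with h | h
    · simp [← h]
    · rw [ha]; field_simp
  have hbt2 : b * t ^ 2 = α * max (t - τ) 0 * t := by
    rcases eq_or_lt_of_le ht with h | h
    · simp [← h]
    · rw [hb]; field_simp
  have hast : a * (s * t) = α * max (s - τ) 0 * t := by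
    rcases eq_or_lt_of_le hs with h | h
    · have : max (s - τ) 0 = 0 := max_eq_right (by linarith)
      rw [this, ← h]; ring
    · rw [ha]; field_simp
  have hbst : b * (s * t) = α * max (t - τ) 0 * s := by
    rcases eq_or_lt_of_le ht with h | h
    · have : max (t - τ) 0 = 0 := max_eq_right (by linarith)
      rw [this, ← h]; ring
    · rw [hb]; field_simp
  have hbound : (a + b) * ⟪x, y⟫ ≤ (a + b) * (s * t) :=
    mul_le_mul_of_nonneg_left hxy (by linarith)
  have hmono : 0 ≤ (α * max (s - τ) 0 - α * max (t - τ) 0) * (s - t) := by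
    rcases le_total s t with h | h
    · have hF : α * max (s - τ) 0 ≤ α * max (t - τ) 0 :=
        mul_le_mul_of_nonneg_left (max_le_max (by linarith) le_rfl) hα.le
      exact mul_nonneg_of_nonpos_of_nonpos (by linarith) (by linarith)
    · have hF : α * max (t - τ) 0 ≤ α * max (s - τ) 0 :=
        mul_le_mul_of_nonneg_left (max_le_max (by linarith) le_rfl) hα.le
      exact mul_nonneg (by linarith) (by linarith)
  have : (a + b) * (s * t) ≤ a * s ^ 2 + b * t ^ 2 := by
    have : (a + b) * (s * t) = a * (s * t) + b * (s * t) := by ring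
    rw [this, hast, hbst, has2, hbt2]
    nlinarith [hmono]
  rw [key]
  linarith
end

section
/- Let E be a real inner product space, α > 0, τ ≥ 0, ε > 0, and define H : E → E by H(S) = α·S + (τ/√(‖S‖² + ε²))·S. Then H is strictly monotone with constant α: for all x, y ∈ E, ⟨H(x) − H(y), x − y⟩ ≥ α·‖x − y‖². -/
open RealInnerProductSpace

private lemma aux_mono (τ ε : ℝ) (hτ : 0 ≤ τ) (hε : 0 < ε) {a b : ℝ}
    (hb : 0 ≤ b) (hab : b ≤ a) :
    (τ / Real.sqrt (b ^ 2 + ε ^ 2)) * b ≤ (τ / Real.sqrt (a ^ 2 + ε ^ 2)) * a := by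
  have ha : 0 ≤ a := hb.trans hab
  have hsa : 0 < Real.sqrt (a ^ 2 + ε ^ 2) := Real.sqrt_pos.2 (by positivity)
  have hsb : 0 < Real.sqrt (b ^ 2 + ε ^ 2) := Real.sqrt_pos.2 (by positivity)
  have h1 : b * Real.sqrt (a ^ 2 + ε ^ 2) ≤ a * Real.sqrt (b ^ 2 + ε ^ 2) := by
    have hb2 : b * Real.sqrt (a ^ 2 + ε ^ 2) = Real.sqrt (b ^ 2 * (a ^ 2 + ε ^ 2)) := by
      rw [Real.sqrt_mul (by positivity), Real.sqrt_sq hb]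
    have ha2 : a * Real.sqrt (b ^ 2 + ε ^ 2) = Real.sqrt (a ^ 2 * (b ^ 2 + ε ^ 2)) := by
      rw [Real.sqrt_mul (by positivity), Real.sqrt_sq ha]
    rw [hb2, ha2]
    apply Real.sqrt_le_sqrt
    nlinarith [mul_le_mul hab hab hb ha, sq_nonneg ε]
  rw [div_mul_eq_mul_div, div_mul_eq_mul_div, div_le_div_iff₀ hsb hsa]
  nlinarith [mul_le_mul_of_nonneg_left h1 hτ]

theorem regularized_activated_euler_strictly_monotone
    {E : Type*} [NormedAddCommGroup E] [InnerProductSpace ℝ E]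
    (α τ ε : ℝ) (hα : 0 < α) (hτ : 0 ≤ τ) (hε : 0 < ε)
    (H : E → E)
    (hH : ∀ S : E, H S = α • S + (τ / Real.sqrt (‖S‖ ^ 2 + ε ^ 2)) • S) :
    ∀ x y : E, α * ‖x - y‖ ^ 2 ≤ ⟪H x - H y, x - y⟫ := by
  intro x y
  set fx := τ / Real.sqrt (‖x‖ ^ 2 + ε ^ 2) with hfx_def
  set fy := τ / Real.sqrt (‖y‖ ^ 2 + ε ^ 2) with hfy_def
  have hfx : 0 ≤ fx := div_nonneg hτ (Real.sqrt_nonneg _)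
  have hfy : 0 ≤ fy := div_nonneg hτ (Real.sqrt_nonneg _)
  have hdiff : H x - H y = α • (x - y) + (fx • x - fy • y) := by
    rw [hH x, hH y]; module
  have hexp : ⟪H x - H y, x - y⟫ =
      α * ‖x - y‖ ^ 2 + (fx * ‖x‖ ^ 2 - fx * ⟪x, y⟫ - fy * ⟪x, y⟫ + fy * ‖y‖ ^ 2) := by
    rw [hdiff, inner_add_left, real_inner_smul_left, real_inner_self_eq_norm_sq,
      inner_sub_left, real_inner_smul_left, real_inner_smul_left,
      inner_sub_right, inner_sub_right, real_inner_self_eq_norm_sq,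
      real_inner_self_eq_norm_sq, real_inner_comm y x]
    ring
  rw [hexp]
  have hcs : ⟪x, y⟫ ≤ ‖x‖ * ‖y‖ := real_inner_le_norm x y
  have hkey : (fy * ‖y‖) * (‖x‖ - ‖y‖) ≤ (fx * ‖x‖) * (‖x‖ - ‖y‖) := by
    rcases le_total ‖y‖ ‖x‖ with h | h
    · exact mul_le_mul_of_nonneg_right (aux_mono τ ε hτ hε (norm_nonneg y) h)
        (by linarith)
    · have := aux_mono τ ε hτ hε (norm_nonneg x) h
      nlinarith
  nlinarith [mul_le_mul_of_nonneg_left hcs (add_nonneg hfx hfy)]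
end

section
/- Let E be a real inner product space, α > 0, τ ≥ 0, ε > 0, and define H : E → E by H(S) = α·S + (τ/√(‖S‖² + ε²))·S. Then H is injective: if H(S₁) = H(S₂) then S₁ = S₂. In particular, in the regularized activated Euler model the deviatoric stress S is uniquely determined by the symmetric part of the velocity gradient D = H(S). -/
open RealInnerProductSpace

lemma rae_mono (τ ε : ℝ) (hτ : 0 ≤ τ) (hε : 0 < ε) {a b : ℝ}
    (ha : 0 ≤ a) (hb : 0 ≤ b) (hab : a ≤ b) :
    τ / Real.sqrt (a ^ 2 + ε ^ 2) * a ≤ τ / Real.sqrt (b ^ 2 + ε ^ 2) * b := by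
  have hA : (0:ℝ) < Real.sqrt (a ^ 2 + ε ^ 2) := Real.sqrt_pos.mpr (by positivity)
  have hB : (0:ℝ) < Real.sqrt (b ^ 2 + ε ^ 2) := Real.sqrt_pos.mpr (by positivity)
  rw [div_mul_eq_mul_div, div_mul_eq_mul_div, div_le_div_iff₀ hA hB]
  have key : a * Real.sqrt (b ^ 2 + ε ^ 2) ≤ b * Real.sqrt (a ^ 2 + ε ^ 2) := by
    have h1 : a * Real.sqrt (b ^ 2 + ε ^ 2) = Real.sqrt (a ^ 2 * (b ^ 2 + ε ^ 2)) := by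
      rw [Real.sqrt_mul (by positivity), Real.sqrt_sq ha]
    have h2 : b * Real.sqrt (a ^ 2 + ε ^ 2) = Real.sqrt (b ^ 2 * (a ^ 2 + ε ^ 2)) := by
      rw [Real.sqrt_mul (by positivity), Real.sqrt_sq hb]
    rw [h1, h2]
    apply Real.sqrt_le_sqrt
    have : a ^ 2 ≤ b ^ 2 := by nlinarith
    nlinarith [sq_nonneg ε]
  calc τ * a * Real.sqrt (b ^ 2 + ε ^ 2) = τ * (a * Real.sqrt (b ^ 2 + ε ^ 2)) := by ring
    _ ≤ τ * (b * Real.sqrt (a ^ 2 + ε ^ 2)) := by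
        exact mul_le_mul_of_nonneg_left key hτ
    _ = τ * b * Real.sqrt (a ^ 2 + ε ^ 2) := by ring

theorem regularized_activated_euler_injective
    {E : Type*} [NormedAddCommGroup E] [InnerProductSpace ℝ E]
    (α τ ε : ℝ) (hα : 0 < α) (hτ : 0 ≤ τ) (hε : 0 < ε)
    (H : E → E)
    (hH : ∀ S : E, H S = α • S + (τ / Real.sqrt (‖S‖ ^ 2 + ε ^ 2)) • S) :
    Function.Injective H := by
  intro S₁ S₂ h
  set a := ‖S₁‖ with ha_def
  set b := ‖S₂‖ with hb_def
  set c₁ := τ / Real.sqrt (a ^ 2 + ε ^ 2) with hc₁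
  set c₂ := τ / Real.sqrt (b ^ 2 + ε ^ 2) with hc₂
  have ha : 0 ≤ a := norm_nonneg _
  have hb : 0 ≤ b := norm_nonneg _
  have hc₁0 : 0 ≤ c₁ := by rw [hc₁]; positivity
  have hc₂0 : 0 ≤ c₂ := by rw [hc₂]; positivity
  -- the key inner product identity
  have hzero : ⟪H S₁ - H S₂, S₁ - S₂⟫ = (0:ℝ) := by
    rw [h, sub_self, inner_zero_left]
  rw [hH S₁, hH S₂] at hzero
  have hexp : ⟪α • S₁ + c₁ • S₁ - (α • S₂ + c₂ • S₂), S₁ - S₂⟫ =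
      α * ⟪S₁ - S₂, S₁ - S₂⟫ + (c₁ * ⟪S₁, S₁⟫ - (c₁ + c₂) * ⟪S₁, S₂⟫ + c₂ * ⟪S₂, S₂⟫) := by
    have hsym : ⟪S₂, S₁⟫ = (⟪S₁, S₂⟫ : ℝ) := real_inner_comm _ _
    simp only [inner_sub_left, inner_sub_right, inner_add_left, inner_smul_left,
      RCLike.star_def, starRingEnd_apply, star_trivial]
    rw [hsym]
    ring
  rw [hexp] at hzero
  have h11 : ⟪S₁, S₁⟫ = a ^ 2 := by rw [real_inner_self_eq_norm_sq]
  have h22 : ⟪S₂, S₂⟫ = b ^ 2 := by rw [real_inner_self_eq_norm_sq]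
  have hdd : ⟪S₁ - S₂, S₁ - S₂⟫ = ‖S₁ - S₂‖ ^ 2 := by
    rw [real_inner_self_eq_norm_sq]
  rw [h11, h22, hdd] at hzero
  have hcs : ⟪S₁, S₂⟫ ≤ a * b := real_inner_le_norm S₁ S₂
  -- nonnegativity of the tau part
  have hg : (c₁ * a - c₂ * b) * (a - b) ≥ 0 := by
    rcases le_total a b with hab | hab
    · have := rae_mono τ ε hτ hε ha hb hab
      rw [← hc₁, ← hc₂] at this
      nlinarith
    · have := rae_mono τ ε hτ hε hb ha hab
      rw [← hc₁, ← hc₂] at this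
      nlinarith
  have htau : c₁ * a ^ 2 - (c₁ + c₂) * ⟪S₁, S₂⟫ + c₂ * b ^ 2 ≥ 0 := by
    have expand : c₁ * a ^ 2 - (c₁ + c₂) * ⟪S₁, S₂⟫ + c₂ * b ^ 2 =
        (c₁ * a - c₂ * b) * (a - b) + (c₁ + c₂) * (a * b - ⟪S₁, S₂⟫) := by ring
    have h2 : (c₁ + c₂) * (a * b - ⟪S₁, S₂⟫) ≥ 0 :=
      mul_nonneg (add_nonneg hc₁0 hc₂0) (sub_nonneg.mpr hcs)
    linarith
  have hnorm : α * ‖S₁ - S₂‖ ^ 2 ≤ 0 := by linarith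
  have : ‖S₁ - S₂‖ ^ 2 ≤ 0 := by
    by_contra hpos
    push_neg at hpos
    nlinarith
  have : ‖S₁ - S₂‖ = 0 := by nlinarith [norm_nonneg (S₁ - S₂)]
  exact sub_eq_zero.mp (norm_eq_zero.mp this)
end

section
/- Let E be a real inner product space and ε > 0. Then the map R : E → E defined by R(x) = x/√(‖x‖² + ε²) is monotone: for all x, y ∈ E, ⟨R(x) − R(y), x − y⟩ ≥ 0. -/
open RealInnerProductSpace

theorem regularized_normalization_monotone
    {E : Type*} [NormedAddCommGroup E] [InnerProductSpace ℝ E]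
    (ε : ℝ) (hε : 0 < ε)
    (R : E → E)
    (hR : ∀ x : E, R x = (Real.sqrt (‖x‖ ^ 2 + ε ^ 2))⁻¹ • x) :
    ∀ x y : E, 0 ≤ ⟪R x - R y, x - y⟫ := by
  intro x y
  rw [hR, hR]
  set s := ‖x‖ with hsdef
  set t := ‖y‖ with htdef
  have hs : 0 ≤ s := norm_nonneg x
  have ht : 0 ≤ t := norm_nonneg y
  set a := Real.sqrt (s ^ 2 + ε ^ 2) with ha
  set b := Real.sqrt (t ^ 2 + ε ^ 2) with hb
  have ha2 : a ^ 2 = s ^ 2 + ε ^ 2 := Real.sq_sqrt (by positivity)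
  have hb2 : b ^ 2 = t ^ 2 + ε ^ 2 := Real.sq_sqrt (by positivity)
  have hapos : 0 < a := Real.sqrt_pos.mpr (by positivity)
  have hbpos : 0 < b := Real.sqrt_pos.mpr (by positivity)
  have hip : ⟪x, y⟫ ≤ s * t := real_inner_le_norm x y
  have hxx : ⟪x, x⟫ = s ^ 2 := real_inner_self_eq_norm_sq x
  have hyy : ⟪y, y⟫ = t ^ 2 := real_inner_self_eq_norm_sq y
  have hsym : ⟪y, x⟫ = ⟪x, y⟫ := (real_inner_comm y x).symm
  have key : 0 ≤ (s - t) * (s * b - t * a) := by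
    rcases le_total s t with h | h
    · have hsq : (s * b) ^ 2 ≤ (t * a) ^ 2 := by
        nlinarith [mul_nonneg (sq_nonneg ε) (mul_nonneg (sub_nonneg.mpr h) (by linarith : (0:ℝ) ≤ t + s))]
      have h1 : s * b ≤ t * a := by
        nlinarith [mul_nonneg ht hapos.le, mul_nonneg hs hbpos.le]
      have := mul_nonneg (sub_nonneg.mpr h) (sub_nonneg.mpr h1)
      nlinarith [this]
    · have hsq : (t * a) ^ 2 ≤ (s * b) ^ 2 := by
        nlinarith [mul_nonneg (sq_nonneg ε) (mul_nonneg (sub_nonneg.mpr h) (by linarith : (0:ℝ) ≤ s + t))]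
      have h1 : t * a ≤ s * b := by
        nlinarith [mul_nonneg ht hapos.le, mul_nonneg hs hbpos.le]
      exact mul_nonneg (by linarith) (by linarith)
  have main : 0 ≤ b * s ^ 2 + a * t ^ 2 - (a + b) * ⟪x, y⟫ := by
    nlinarith [key, mul_nonneg (add_pos hapos hbpos).le (sub_nonneg.mpr hip)]
  rw [inner_sub_left, inner_sub_right, inner_sub_right, real_inner_smul_left,
    real_inner_smul_left, real_inner_smul_left, real_inner_smul_left, hxx, hyy, hsym]
  have heq : a⁻¹ * s ^ 2 - a⁻¹ * ⟪x, y⟫ - (b⁻¹ * ⟪x, y⟫ - b⁻¹ * t ^ 2)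
      = (a * b)⁻¹ * (b * s ^ 2 + a * t ^ 2 - (a + b) * ⟪x, y⟫) := by
    field_simp
    ring
  rw [heq]
  exact mul_nonneg (inv_nonneg.mpr (mul_nonneg hapos.le hbpos.le)) main
end

section
/- Let E be a real inner product space, ν > 0, σ ≥ 0, ε > 0, and define the regularized Bingham constitutive map B : E → E by B(D) = 2ν·D + (σ/√(‖D‖² + ε²))·D. Then B is strictly monotone with constant 2ν: for all x, y ∈ E, ⟨B(x) − B(y), x − y⟩ ≥ 2ν·‖x − y‖². -/
open RealInnerProductSpace

private lemma bingham_sqrt_pos (ε : ℝ) (hε : 0 < ε) (a : ℝ) :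
    0 < Real.sqrt (a ^ 2 + ε ^ 2) :=
  Real.sqrt_pos.mpr (by positivity)

private lemma bingham_key (σ ε : ℝ) (hσ : 0 ≤ σ) (hε : 0 < ε) {a b : ℝ}
    (ha : 0 ≤ a) (hb : 0 ≤ b) :
    0 ≤ (σ / Real.sqrt (a ^ 2 + ε ^ 2) * a - σ / Real.sqrt (b ^ 2 + ε ^ 2) * b) * (a - b) := by
  have hsa := bingham_sqrt_pos ε hε a
  have hsb := bingham_sqrt_pos ε hε b
  have hsa2 : Real.sqrt (a ^ 2 + ε ^ 2) ^ 2 = a ^ 2 + ε ^ 2 :=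
    Real.sq_sqrt (by positivity)
  have hsb2 : Real.sqrt (b ^ 2 + ε ^ 2) ^ 2 = b ^ 2 + ε ^ 2 :=
    Real.sq_sqrt (by positivity)
  set sa := Real.sqrt (a ^ 2 + ε ^ 2)
  set sb := Real.sqrt (b ^ 2 + ε ^ 2)
  -- monotonicity of s ↦ s / sqrt (s² + ε²)
  have key : ∀ {u v su sv : ℝ}, 0 ≤ u → u ≤ v → 0 < su → 0 < sv →
      su ^ 2 = u ^ 2 + ε ^ 2 → sv ^ 2 = v ^ 2 + ε ^ 2 → u / su ≤ v / sv := by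
    intro u v su sv hu huv hsu hsv h1 h2
    rw [div_le_div_iff₀ hsu hsv]
    have hv : 0 ≤ v := hu.trans huv
    have hsq : (u * sv) ^ 2 ≤ (v * su) ^ 2 := by
      have huv2 : u ^ 2 ≤ v ^ 2 := pow_le_pow_left₀ hu huv 2
      nlinarith [mul_le_mul_of_nonneg_left huv2 (sq_nonneg ε)]
    calc u * sv = Real.sqrt ((u * sv) ^ 2) :=
          (Real.sqrt_sq (mul_nonneg hu hsv.le)).symm
      _ ≤ Real.sqrt ((v * su) ^ 2) := Real.sqrt_le_sqrt hsq
      _ = v * su := Real.sqrt_sq (mul_nonneg hv hsu.le)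
  rcases le_total a b with h | h
  · have h1 := key ha h hsa hsb hsa2 hsb2
    have h2 : σ * (a / sa) ≤ σ * (b / sb) := mul_le_mul_of_nonneg_left h1 hσ
    have h3 : 0 ≤ (σ * (b / sb) - σ * (a / sa)) * (b - a) :=
      mul_nonneg (by linarith) (by linarith)
    have e : (σ * (b / sb) - σ * (a / sa)) * (b - a)
        = (σ / sa * a - σ / sb * b) * (a - b) := by ring
    linarith [e ▸ h3]
  · have h1 := key hb h hsb hsa hsb2 hsa2
    have h2 : σ * (b / sb) ≤ σ * (a / sa) := mul_le_mul_of_nonneg_left h1 hσ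
    have h3 : 0 ≤ (σ * (a / sa) - σ * (b / sb)) * (a - b) :=
      mul_nonneg (by linarith) (by linarith)
    have e : (σ * (a / sa) - σ * (b / sb)) * (a - b)
        = (σ / sa * a - σ / sb * b) * (a - b) := by ring
    linarith [e ▸ h3]

theorem regularized_bingham_strictly_monotone
    {E : Type*} [NormedAddCommGroup E] [InnerProductSpace ℝ E]
    (ν σ ε : ℝ) (hν : 0 < ν) (hσ : 0 ≤ σ) (hε : 0 < ε)
    (B : E → E)
    (hB : ∀ D : E, B D = (2 * ν) • D + (σ / Real.sqrt (‖D‖ ^ 2 + ε ^ 2)) • D) :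
    ∀ x y : E, 2 * ν * ‖x - y‖ ^ 2 ≤ ⟪B x - B y, x - y⟫ := by
  intro x y
  have hsa := bingham_sqrt_pos ε hε ‖x‖
  have hsb := bingham_sqrt_pos ε hε ‖y‖
  have key := bingham_key σ ε hσ hε (norm_nonneg x) (norm_nonneg y)
  have hxy : ⟪x, y⟫ ≤ ‖x‖ * ‖y‖ := real_inner_le_norm x y
  have hxx : ⟪x, x⟫ = ‖x‖ ^ 2 := real_inner_self_eq_norm_sq x
  have hyy : ⟪y, y⟫ = ‖y‖ ^ 2 := real_inner_self_eq_norm_sq y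
  have hnorm : ‖x - y‖ ^ 2 = ‖x‖ ^ 2 - 2 * ⟪x, y⟫ + ‖y‖ ^ 2 :=
    norm_sub_sq_real x y
  rw [hB, hB]
  simp only [inner_sub_left, inner_sub_right, inner_add_left, real_inner_smul_left]
  have hc : (⟪y, x⟫ : ℝ) = ⟪x, y⟫ := real_inner_comm x y
  set ga := σ / Real.sqrt (‖x‖ ^ 2 + ε ^ 2) with hga
  set gb := σ / Real.sqrt (‖y‖ ^ 2 + ε ^ 2) with hgb
  have hga0 : 0 ≤ ga := div_nonneg hσ hsa.le
  have hgb0 : 0 ≤ gb := div_nonneg hσ hsb.le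
  have t1 : ga * ⟪x, y⟫ ≤ ga * (‖x‖ * ‖y‖) := mul_le_mul_of_nonneg_left hxy hga0
  have t2 : gb * ⟪x, y⟫ ≤ gb * (‖x‖ * ‖y‖) := mul_le_mul_of_nonneg_left hxy hgb0
  nlinarith [key, t1, t2, hc, hxx, hyy, hnorm]
end
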